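/- For ξ = √((1−F′)/(1−F)) > 1 and μ = √(F′/F) < 1, the qubit map Λ̃(ρ) = ((ξ+μ)/2)ρ + ((1−μ)/2)σ_x ρ σ_x − ((ξ−1)/2)σ_z ρ σ_z is Hermitian-preserving and trace-preserving, maps α|0⟩ ± β|1⟩ (with α² + β² = 1, 4α²β² = 1 − F) to a|0⟩ ± b|1⟩ (with a² + b² = 1, 4a²b² = 1 − F′), and is a difference λ₊Λ₊ − λ₋Λ₋ of CPTP maps with λ₊ + λ₋ = ξ. -/

import Mathlib

open Matrix Kronecker BigOperators
open scoped ComplexOrder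

noncomputable def psdSqrtOld {ι : Type*} [Fintype ι] [DecidableEq ι] {M : Matrix ι ι ℂ}
    (hM : M.PosSemidef) : Matrix ι ι ℂ :=
  hM.1.eigenvectorUnitary.1 * diagonal (((↑) : ℝ → ℂ) ∘ (√·) ∘ hM.1.eigenvalues) *
    (star hM.1.eigenvectorUnitary : Matrix ι ι ℂ)

noncomputable def traceNorm {ι : Type*} [Fintype ι] [DecidableEq ι] (A : Matrix ι ι ℂ) : ℝ :=
  ((psdSqrtOld (Matrix.posSemidef_conjTranspose_mul_self A)).trace).re

def IsDensity {ι : Type*} [Fintype ι] [DecidableEq ι] (ρ : Matrix ι ι ℂ) : Prop :=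
  ρ.PosSemidef ∧ ρ.trace = 1

noncomputable def kronPow {ι : Type*} [Fintype ι] (A : Matrix ι ι ℂ) (k : ℕ) :
    Matrix (Fin k → ι) (Fin k → ι) ℂ :=
  Matrix.of fun x y => ∏ i, A (x i) (y i)

def choiMatrix {ι κ : Type*} [Fintype ι] [DecidableEq ι] [Fintype κ]
    (Λ : Matrix ι ι ℂ →ₗ[ℂ] Matrix κ κ ℂ) : Matrix (ι × κ) (ι × κ) ℂ :=
  Matrix.of fun p q => Λ (Matrix.single p.1 q.1 1) p.2 q.2

def IsCPTP {ι κ : Type*} [Fintype ι] [DecidableEq ι] [Fintype κ]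
    (Λ : Matrix ι ι ℂ →ₗ[ℂ] Matrix κ κ ℂ) : Prop :=
  (choiMatrix Λ).PosSemidef ∧ ∀ A, (Λ A).trace = A.trace

def IsHPTP {ι κ : Type*} [Fintype ι] [Fintype κ]
    (Λ : Matrix ι ι ℂ →ₗ[ℂ] Matrix κ κ ℂ) : Prop :=
  (∀ A, A.IsHermitian → (Λ A).IsHermitian) ∧ ∀ A, (Λ A).trace = A.trace

noncomputable def proj {ι : Type*} (ψ : ι → ℂ) : Matrix ι ι ℂ := Matrix.vecMulVec ψ (star ψ)

noncomputable def overlap {ι : Type*} [Fintype ι] (ψ φ : ι → ℂ) : ℂ := ∑ i, (starRingEnd ℂ) (ψ i) * φ i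

noncomputable def pauliX : Matrix (Fin 2) (Fin 2) ℂ := !![0, 1; 1, 0]
noncomputable def pauliZ : Matrix (Fin 2) (Fin 2) ℂ := !![1, 0; 0, -1]

/- auxiliary lemmas -/

lemma psd_vecMulVec {n : Type*} [Fintype n] (v : n → ℂ) :
    (Matrix.vecMulVec v (star v)).PosSemidef := by
  rw [posSemidef_iff_dotProduct_mulVec]
  constructor
  · ext i j
    simp [Matrix.vecMulVec_apply, Matrix.conjTranspose_apply, mul_comm]
  · intro x
    have h : star x ⬝ᵥ (Matrix.vecMulVec v (star v)) *ᵥ x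
        = (star x ⬝ᵥ v) * star (star x ⬝ᵥ v) := by
      simp only [dotProduct, mulVec, Matrix.vecMulVec_apply, Finset.mul_sum,
        Finset.sum_mul, star_sum, star_mul', star_star, Pi.star_apply]
      rw [Finset.sum_comm]
      congr 1; ext i; congr 1; ext j; ring
    rw [h]
    exact mul_star_self_nonneg _

lemma psd_smul_real {n : Type*} [Fintype n] {A : Matrix n n ℂ} (hA : A.PosSemidef)
    {c : ℝ} (hc : 0 ≤ c) : ((c : ℂ) • A).PosSemidef := by
  rw [posSemidef_iff_dotProduct_mulVec]
  constructor
  · show ((c : ℂ) • A)ᴴ = _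
    rw [Matrix.conjTranspose_smul, hA.1.eq, Complex.star_def, Complex.conj_ofReal]
  · intro x
    rw [Matrix.smul_mulVec, dotProduct_smul, smul_eq_mul]
    exact mul_nonneg (by exact_mod_cast hc) ((posSemidef_iff_dotProduct_mulVec.mp hA).2 x)

lemma psd_add {n : Type*} [Fintype n] {A B : Matrix n n ℂ} (hA : A.PosSemidef)
    (hB : B.PosSemidef) : (A + B).PosSemidef := by
  rw [posSemidef_iff_dotProduct_mulVec]
  refine ⟨hA.1.add hB.1, fun x => ?_⟩
  rw [Matrix.add_mulVec, dotProduct_add]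
  exact add_nonneg ((posSemidef_iff_dotProduct_mulVec.mp hA).2 x) ((posSemidef_iff_dotProduct_mulVec.mp hB).2 x)

noncomputable def conjMap (U : Matrix (Fin 2) (Fin 2) ℂ) :
    Matrix (Fin 2) (Fin 2) ℂ →ₗ[ℂ] Matrix (Fin 2) (Fin 2) ℂ where
  toFun ρ := U * ρ * Uᴴ
  map_add' x y := by noncomm_ring
  map_smul' c x := by simp [Matrix.mul_smul, Matrix.smul_mul]

lemma choi_conjMap (U : Matrix (Fin 2) (Fin 2) ℂ) :
    choiMatrix (conjMap U) =
      Matrix.vecMulVec (fun p : Fin 2 × Fin 2 => U p.2 p.1)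
        (star fun p : Fin 2 × Fin 2 => U p.2 p.1) := by
  ext ⟨i, k⟩ ⟨j, l⟩
  simp [choiMatrix, conjMap, Matrix.vecMulVec_apply, Matrix.mul_apply,
    Matrix.single, Matrix.conjTranspose_apply, Fin.sum_univ_two,
    Finset.sum_ite_eq, mul_comm]
  fin_cases i <;> fin_cases j <;> simp

lemma choi_psd_conjMap (U : Matrix (Fin 2) (Fin 2) ℂ) :
    (choiMatrix (conjMap U)).PosSemidef := by
  rw [choi_conjMap]; exact psd_vecMulVec _

lemma pauliX_herm : pauliXᴴ = pauliX := by
  ext i j; fin_cases i <;> fin_cases j <;> simp [pauliX]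

lemma pauliZ_herm : pauliZᴴ = pauliZ := by
  ext i j; fin_cases i <;> fin_cases j <;> simp [pauliZ]

lemma pauliX_sq : pauliX * pauliX = 1 := by
  simp [pauliX, Matrix.mul_fin_two, Matrix.one_fin_two]

lemma pauliZ_sq : pauliZ * pauliZ = 1 := by
  simp [pauliZ, Matrix.mul_fin_two, Matrix.one_fin_two]

lemma trace_conj (U ρ : Matrix (Fin 2) (Fin 2) ℂ) (hU : U * U = 1) (hUh : Uᴴ = U) :
    (U * ρ * U).trace = ρ.trace := by
  rw [Matrix.trace_mul_cycle, hU, Matrix.one_mul]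

set_option maxHeartbeats 1600000 in
theorem virtual_cloning_stmt14 (F F' : ℝ) (hF' : 0 < F') (hFF' : F' < F) (hF : F < 1)
    (ξ μ : ℝ) (hξ : ξ = Real.sqrt ((1 - F') / (1 - F))) (hμ : μ = Real.sqrt (F' / F))
    (α β a b : ℝ) (hαβ : β ≤ α) (hβ : 0 ≤ β) (hab : b ≤ a) (hb : 0 ≤ b)
    (hαβnorm : α ^ 2 + β ^ 2 = 1) (habnorm : a ^ 2 + b ^ 2 = 1)
    (hαβF : 4 * α ^ 2 * β ^ 2 = 1 - F) (habF' : 4 * a ^ 2 * b ^ 2 = 1 - F')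
    (Λ : Matrix (Fin 2) (Fin 2) ℂ → Matrix (Fin 2) (Fin 2) ℂ)
    (hΛ : Λ = fun ρ => (((ξ + μ) / 2 : ℝ) : ℂ) • ρ
      + (((1 - μ) / 2 : ℝ) : ℂ) • (pauliX * ρ * pauliX)
      - (((ξ - 1) / 2 : ℝ) : ℂ) • (pauliZ * ρ * pauliZ)) :
    (∀ ρ : Matrix (Fin 2) (Fin 2) ℂ, ρ.IsHermitian → (Λ ρ).IsHermitian) ∧
    (∀ ρ : Matrix (Fin 2) (Fin 2) ℂ, (Λ ρ).trace = ρ.trace) ∧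
    Λ (proj ![(α : ℂ), (β : ℂ)]) = proj ![(a : ℂ), (b : ℂ)] ∧
    Λ (proj ![(α : ℂ), -(β : ℂ)]) = proj ![(a : ℂ), -(b : ℂ)] ∧
    (∃ (Λp Λm : Matrix (Fin 2) (Fin 2) ℂ →ₗ[ℂ] Matrix (Fin 2) (Fin 2) ℂ) (lp lm : ℝ),
      IsCPTP Λp ∧ IsCPTP Λm ∧ 0 ≤ lp ∧ 0 ≤ lm ∧ lp - lm = 1 ∧ lp + lm = ξ ∧
      ∀ ρ : Matrix (Fin 2) (Fin 2) ℂ, Λ ρ = (lp : ℂ) • Λp ρ - (lm : ℂ) • Λm ρ) := by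
  subst hΛ
  -- basic real inequalities
  have hF0 : 0 < F := lt_trans hF' hFF'
  have h1F : 0 < 1 - F := by linarith
  have h1F' : 0 < 1 - F' := by linarith
  have hμ0 : 0 ≤ μ := hμ ▸ Real.sqrt_nonneg _
  have hμ1 : μ ≤ 1 := by
    rw [hμ, Real.sqrt_le_one]
    rw [div_le_one hF0]; linarith
  have hξ1 : 1 ≤ ξ := by
    rw [hξ, Real.one_le_sqrt]
    rw [le_div_iff₀ h1F]; linarith
  have hξ0 : 0 < ξ := by linarith
  -- sqrt identifications
  have hαβ2 : 0 ≤ α ^ 2 - β ^ 2 := by nlinarith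
  have hab2 : 0 ≤ a ^ 2 - b ^ 2 := by nlinarith
  have hα : 0 ≤ α := le_trans hβ hαβ
  have ha : 0 ≤ a := le_trans hb hab
  have hsF : Real.sqrt F = α ^ 2 - β ^ 2 := by
    rw [show F = (α ^ 2 - β ^ 2) ^ 2 by nlinarith]
    exact Real.sqrt_sq hαβ2
  have hsF' : Real.sqrt F' = a ^ 2 - b ^ 2 := by
    rw [show F' = (a ^ 2 - b ^ 2) ^ 2 by nlinarith]
    exact Real.sqrt_sq hab2
  have hs1F : Real.sqrt (1 - F) = 2 * (α * β) := by
    rw [show 1 - F = (2 * (α * β)) ^ 2 by nlinarith]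
    exact Real.sqrt_sq (by positivity)
  have hs1F' : Real.sqrt (1 - F') = 2 * (a * b) := by
    rw [show 1 - F' = (2 * (a * b)) ^ 2 by nlinarith]
    exact Real.sqrt_sq (by positivity)
  have hsFpos : 0 < Real.sqrt F := Real.sqrt_pos.mpr hF0
  have hs1Fpos : 0 < Real.sqrt (1 - F) := Real.sqrt_pos.mpr h1F
  have k1 : μ * (α ^ 2 - β ^ 2) = a ^ 2 - b ^ 2 := by
    rw [← hsF, ← hsF', hμ, Real.sqrt_div hF'.le, div_mul_cancel₀]
    exact ne_of_gt hsFpos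
  have k2 : ξ * (α * β) = a * b := by
    have : ξ * (2 * (α * β)) = 2 * (a * b) := by
      rw [← hs1F, ← hs1F', hξ, Real.sqrt_div h1F'.le, div_mul_cancel₀]
      exact ne_of_gt hs1Fpos
    linarith
  have k1c : (μ : ℂ) * ((α : ℂ) ^ 2 - (β : ℂ) ^ 2) = (a : ℂ) ^ 2 - (b : ℂ) ^ 2 := by
    exact_mod_cast k1
  have k2c : (ξ : ℂ) * ((α : ℂ) * (β : ℂ)) = (a : ℂ) * (b : ℂ) := by exact_mod_cast k2
  have hnc : (α : ℂ) ^ 2 + (β : ℂ) ^ 2 = 1 := by exact_mod_cast hαβnorm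
  have hnc' : (a : ℂ) ^ 2 + (b : ℂ) ^ 2 = 1 := by exact_mod_cast habnorm
  refine ⟨?_, ?_, ?_, ?_, ?_⟩
  · -- Hermitian preserving
    intro ρ hρ
    show _ = _
    simp only [Matrix.conjTranspose_sub, Matrix.conjTranspose_add,
      Matrix.conjTranspose_smul, Matrix.conjTranspose_mul, pauliX_herm, pauliZ_herm,
      hρ.eq, Complex.star_def, Complex.conj_ofReal, Matrix.mul_assoc]
  · -- trace preserving
    intro ρ
    simp only [Matrix.trace_sub, Matrix.trace_add, Matrix.trace_smul,
      trace_conj pauliX ρ pauliX_sq pauliX_herm,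
      trace_conj pauliZ ρ pauliZ_sq pauliZ_herm, smul_eq_mul]
    push_cast
    ring
  · -- first projector
    have hp1 : proj ![(α : ℂ), (β : ℂ)] = !![(α:ℂ)^2, α*β; α*β, β^2] := by
      ext i j
      fin_cases i <;> fin_cases j <;>
        simp [proj, Matrix.vecMulVec_apply, Complex.conj_ofReal] <;> ring
    have hp2 : proj ![(a : ℂ), (b : ℂ)] = !![(a:ℂ)^2, a*b; a*b, b^2] := by
      ext i j
      fin_cases i <;> fin_cases j <;>
        simp [proj, Matrix.vecMulVec_apply, Complex.conj_ofReal] <;> ring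
    show _ = _
    rw [hp1, hp2]
    simp only [pauliX, pauliZ, Matrix.mul_fin_two]
    ext i j
    fin_cases i <;> fin_cases j <;>
      simp [Matrix.smul_apply, smul_eq_mul] <;> push_cast <;> ring_nf
    · linear_combination (1 / 2 : ℂ) * hnc + (1 / 2 : ℂ) * k1c - (1 / 2 : ℂ) * hnc'
    · linear_combination k2c
    · linear_combination k2c
    · linear_combination (1 / 2 : ℂ) * hnc - (1 / 2 : ℂ) * k1c - (1 / 2 : ℂ) * hnc'
  · -- second projector
    have hp1 : proj ![(α : ℂ), -(β : ℂ)] = !![(α:ℂ)^2, -(α*β); -(α*β), β^2] := by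
      ext i j
      fin_cases i <;> fin_cases j <;>
        simp [proj, Matrix.vecMulVec_apply, Complex.conj_ofReal] <;> ring
    have hp2 : proj ![(a : ℂ), -(b : ℂ)] = !![(a:ℂ)^2, -(a*b); -(a*b), b^2] := by
      ext i j
      fin_cases i <;> fin_cases j <;>
        simp [proj, Matrix.vecMulVec_apply, Complex.conj_ofReal] <;> ring
    show _ = _
    rw [hp1, hp2]
    simp only [pauliX, pauliZ, Matrix.mul_fin_two]
    ext i j
    fin_cases i <;> fin_cases j <;>
      simp [Matrix.smul_apply, smul_eq_mul] <;> push_cast <;> ring_nf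
    · linear_combination (1 / 2 : ℂ) * hnc + (1 / 2 : ℂ) * k1c - (1 / 2 : ℂ) * hnc'
    · linear_combination -k2c
    · linear_combination -k2c
    · linear_combination (1 / 2 : ℂ) * hnc - (1 / 2 : ℂ) * k1c - (1 / 2 : ℂ) * hnc'
  · -- decomposition
    have hξ1' : (ξ : ℝ) + 1 ≠ 0 := by positivity
    have hp0 : 0 ≤ (ξ + μ) / (ξ + 1) := by positivity
    have hq0 : 0 ≤ (1 - μ) / (ξ + 1) := div_nonneg (by linarith) (by linarith)
    have hpqR : (ξ + μ) / (ξ + 1) + (1 - μ) / (ξ + 1) = 1 := by field_simp; ring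
    have hpq : (((ξ + μ) / (ξ + 1) : ℝ) : ℂ) + (((1 - μ) / (ξ + 1) : ℝ) : ℂ) = 1 := by
      exact_mod_cast hpqR
    have c1R : ((ξ + 1) / 2) * ((ξ + μ) / (ξ + 1)) = (ξ + μ) / 2 := by
      field_simp
    have c2R : ((ξ + 1) / 2) * ((1 - μ) / (ξ + 1)) = (1 - μ) / 2 := by
      field_simp
    refine ⟨((((ξ + μ) / (ξ + 1) : ℝ) : ℂ)) • conjMap 1
        + ((((1 - μ) / (ξ + 1) : ℝ) : ℂ)) • conjMap pauliX, conjMap pauliZ,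
      (ξ + 1) / 2, (ξ - 1) / 2, ⟨?_, ?_⟩, ⟨?_, ?_⟩, by linarith, by linarith,
      by ring, by ring, ?_⟩
    · -- Choi of Λp PSD
      have hch : choiMatrix (((((ξ + μ) / (ξ + 1) : ℝ) : ℂ)) • conjMap 1
            + ((((1 - μ) / (ξ + 1) : ℝ) : ℂ)) • conjMap pauliX)
          = ((((ξ + μ) / (ξ + 1) : ℝ) : ℂ)) • choiMatrix (conjMap 1)
            + ((((1 - μ) / (ξ + 1) : ℝ) : ℂ)) • choiMatrix (conjMap pauliX) := by
        ext pq rs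
        simp [choiMatrix, LinearMap.add_apply, LinearMap.smul_apply]
      rw [hch]
      exact psd_add (psd_smul_real (choi_psd_conjMap 1) hp0)
        (psd_smul_real (choi_psd_conjMap pauliX) hq0)
    · -- trace preserving Λp
      intro A
      simp only [LinearMap.add_apply, LinearMap.smul_apply, Matrix.trace_add,
        Matrix.trace_smul, smul_eq_mul, conjMap, LinearMap.coe_mk, AddHom.coe_mk,
        pauliX_herm, Matrix.conjTranspose_one,
        trace_conj pauliX A pauliX_sq pauliX_herm]
      rw [Matrix.one_mul, Matrix.mul_one]
      linear_combination A.trace * hpq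
    · -- Choi of Λm PSD
      exact choi_psd_conjMap pauliZ
    · -- trace preserving Λm
      intro A
      simp only [conjMap, LinearMap.coe_mk, AddHom.coe_mk, pauliZ_herm]
      exact trace_conj pauliZ A pauliZ_sq pauliZ_herm
    · -- decomposition equation
      intro ρ
      simp only [LinearMap.add_apply, LinearMap.smul_apply, conjMap, LinearMap.coe_mk,
        AddHom.coe_mk, pauliX_herm, pauliZ_herm, Matrix.conjTranspose_one,
        Matrix.one_mul, Matrix.mul_one, smul_add, smul_smul]
      have c1 : (((ξ + 1) / 2 : ℝ) : ℂ) * (((ξ + μ) / (ξ + 1) : ℝ) : ℂ)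
          = (((ξ + μ) / 2 : ℝ) : ℂ) := by exact_mod_cast congrArg Complex.ofReal c1R
      have c2 : (((ξ + 1) / 2 : ℝ) : ℂ) * (((1 - μ) / (ξ + 1) : ℝ) : ℂ)
          = (((1 - μ) / 2 : ℝ) : ℂ) := by exact_mod_cast congrArg Complex.ofReal c2R
      rw [c1, c2]
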